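/- arXiv:2403.16162 — 3 statements merged into one kernel-verified Lean document; each statement's English description precedes it below -/
import Mathlib

section
/- Let M ∈ ℝ^{n×n} be symmetric stochastic and let B ∈ ℝ^{n×n} be any symmetric matrix. Denote by λ₁(A) ≥ λ₂(A) ≥ … ≥ λ_n(A) the eigenvalues of a symmetric matrix A in decreasing order. Then λ_k(M + B) ≤ λ_k(I + B) for every k = 1, …, n. -/
/-- The eigenvalues of a real symmetric (Hermitian) matrix listed in decreasing order:
`eigDesc hA 0 = λ₁ ≥ eigDesc hA 1 = λ₂ ≥ …`. -/
noncomputable def eigDesc {n : ℕ} {A : Matrix (Fin n) (Fin n) ℝ}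
    (hA : A.IsHermitian) (k : Fin n) : ℝ :=
  (hA.eigenvalues ∘ Tuple.sort hA.eigenvalues) k.rev


/-!
A symmetric stochastic `M` satisfies `M ≤ 1` in the Loewner order: its spectrum lies in the
closed ball of radius `‖M‖∞ = 1`. Hence `M + B ≤ 1 + B`, and eigenvalues in decreasing order are
monotone for the Loewner order (Courant–Fischer). For the latter, if `T ≤ S` then the span of the
top `k + 1` eigenvectors of `T` and the span of the bottom `n - k` eigenvectors of `S` meet in a
nonzero `x`, and `λₖ(T) ‖x‖² ≤ re ⟪T x, x⟫ ≤ re ⟪S x, x⟫ ≤ λₖ(S) ‖x‖²`.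
-/

open Module Submodule RCLike
open scoped InnerProductSpace MatrixOrder

theorem Submodule.inf_ne_bot_of_finrank_lt_add {K V : Type*} [DivisionRing K] [AddCommGroup V]
    [Module K V] [FiniteDimensional K V] {U W : Submodule K V}
    (h : finrank K V < finrank K U + finrank K W) : U ⊓ W ≠ ⊥ := by
  intro hUW
  have hsum := Submodule.finrank_sup_add_finrank_inf_eq U W
  rw [hUW, finrank_bot, add_zero] at hsum
  have := Submodule.finrank_le (U ⊔ W)
  omega

theorem Tuple.apply_sort_rev_of_antitone {α : Type*} [LinearOrder α] {n : ℕ} {f : Fin n → α}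
    (σ : Equiv.Perm (Fin n)) (hf : Antitone (f ∘ σ)) (k : Fin n) :
    f (Tuple.sort f k.rev) = f (σ k) := by
  have hsort : f ∘ (Fin.revPerm.trans σ) = f ∘ Tuple.sort f :=
    Tuple.comp_sort_eq_comp_iff_monotone.mpr fun i j hij => hf (Fin.rev_le_rev.mpr hij)
  simpa using (congrFun hsort k.rev).symm

variable {𝕜 E : Type*} [RCLike 𝕜] [NormedAddCommGroup E] [InnerProductSpace 𝕜 E]

namespace OrthonormalBasis

variable {ι : Type*} [Fintype ι]

theorem inner_eq_zero_of_mem_span_image (b : OrthonormalBasis ι 𝕜 E) {s : Set ι} {x : E}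
    (hx : x ∈ span 𝕜 (b '' s)) {j : ι} (hj : j ∉ s) : ⟪b j, x⟫_𝕜 = 0 := by
  rw [← b.coe_toBasis, b.toBasis.mem_span_image] at hx
  rw [← b.repr_apply_apply, ← b.coe_toBasis_repr_apply]
  exact Finsupp.notMem_support_iff.mp fun hjx => hj (hx hjx)

theorem finrank_span_image (b : OrthonormalBasis ι 𝕜 E) (s : Finset ι) :
    finrank 𝕜 (span 𝕜 (b '' s)) = s.card := by
  rw [Set.image_eq_range]
  exact (finrank_span_eq_card
    (b.orthonormal.linearIndependent.comp _ Subtype.val_injective)).trans (by simp)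

end OrthonormalBasis

namespace LinearMap.IsSymmetric

variable [FiniteDimensional 𝕜 E] {n : ℕ} (hn : finrank 𝕜 E = n) {T S : E →ₗ[𝕜] E}

theorem re_inner_apply_self_eq_sum (hT : T.IsSymmetric) (x : E) :
    re ⟪T x, x⟫_𝕜 =
      ∑ i, hT.eigenvalues hn i * ‖⟪hT.eigenvectorBasis hn i, x⟫_𝕜‖ ^ 2 := by
  rw [← (hT.eigenvectorBasis hn).sum_inner_mul_inner (T x) x, map_sum]
  refine Finset.sum_congr rfl fun i _ => ?_
  rw [hT, apply_eigenvectorBasis, inner_smul_right, ← inner_conj_symm, mul_assoc,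
    RCLike.conj_mul]
  norm_cast

theorem mul_norm_sq_le_re_inner_of_mem_span (hT : T.IsSymmetric) {s : Set (Fin n)} {r : ℝ}
    (hr : ∀ i ∈ s, r ≤ hT.eigenvalues hn i) {x : E}
    (hx : x ∈ span 𝕜 (hT.eigenvectorBasis hn '' s)) : r * ‖x‖ ^ 2 ≤ re ⟪T x, x⟫_𝕜 := by
  rw [hT.re_inner_apply_self_eq_sum hn, ← (hT.eigenvectorBasis hn).sum_sq_norm_inner_right,
    Finset.mul_sum]
  refine Finset.sum_le_sum fun i _ => ?_
  by_cases hi : i ∈ s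
  · exact mul_le_mul_of_nonneg_right (hr i hi) (sq_nonneg _)
  · simp [(hT.eigenvectorBasis hn).inner_eq_zero_of_mem_span_image hx hi]

theorem re_inner_le_mul_norm_sq_of_mem_span (hT : T.IsSymmetric) {s : Set (Fin n)} {r : ℝ}
    (hr : ∀ i ∈ s, hT.eigenvalues hn i ≤ r) {x : E}
    (hx : x ∈ span 𝕜 (hT.eigenvectorBasis hn '' s)) : re ⟪T x, x⟫_𝕜 ≤ r * ‖x‖ ^ 2 := by
  rw [hT.re_inner_apply_self_eq_sum hn, ← (hT.eigenvectorBasis hn).sum_sq_norm_inner_right,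
    Finset.mul_sum]
  refine Finset.sum_le_sum fun i _ => ?_
  by_cases hi : i ∈ s
  · exact mul_le_mul_of_nonneg_right (hr i hi) (sq_nonneg _)
  · simp [(hT.eigenvectorBasis hn).inner_eq_zero_of_mem_span_image hx hi]

theorem eigenvalues_le_of_le (hT : T.IsSymmetric) (hS : S.IsSymmetric) (hTS : T ≤ S)
    (k : Fin n) : hT.eigenvalues hn k ≤ hS.eigenvalues hn k := by
  set V := span 𝕜 (hT.eigenvectorBasis hn '' ↑(Finset.Iic k))
  set W := span 𝕜 (hS.eigenvectorBasis hn '' ↑(Finset.Ici k))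
  have hVW : V ⊓ W ≠ ⊥ := by
    apply Submodule.inf_ne_bot_of_finrank_lt_add
    rw [OrthonormalBasis.finrank_span_image, OrthonormalBasis.finrank_span_image, Fin.card_Iic,
      Fin.card_Ici, hn]
    omega
  obtain ⟨x, ⟨hxV, hxW⟩, hx⟩ := Submodule.exists_mem_ne_zero_of_ne_bot hVW
  have hTx := hT.mul_norm_sq_le_re_inner_of_mem_span hn
    (fun i hi => hT.eigenvalues_antitone hn (Finset.mem_Iic.mp hi)) hxV
  have hSx := hS.re_inner_le_mul_norm_sq_of_mem_span hn
    (fun i hi => hS.eigenvalues_antitone hn (Finset.mem_Ici.mp hi)) hxW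
  have hTSx : re ⟪T x, x⟫_𝕜 ≤ re ⟪S x, x⟫_𝕜 := by
    simpa [inner_sub_left] using ((LinearMap.le_def T S).mp hTS).re_inner_nonneg_left x
  exact le_of_mul_le_mul_right (hTx.trans (hTSx.trans hSx)) (by positivity)

end LinearMap.IsSymmetric

namespace Matrix

theorem IsHermitian.eigenvalues₀_le_of_le {ι : Type*} [Fintype ι] [DecidableEq ι]
    {A C : Matrix ι ι 𝕜} (hA : A.IsHermitian) (hC : C.IsHermitian) (hAC : A ≤ C)
    (k : Fin (Fintype.card ι)) : hA.eigenvalues₀ k ≤ hC.eigenvalues₀ k := by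
  refine LinearMap.IsSymmetric.eigenvalues_le_of_le _ _ _ ?_ k
  rw [LinearMap.le_def, ← map_sub, isPositive_toEuclideanLin_iff]
  exact hAC

section LinftyOpNorm

attribute [local instance] Matrix.linftyOpNormedAddCommGroup Matrix.linftyOpNormedRing
  Matrix.linftyOpNormedAlgebra

theorem linfty_opNorm_le_one_of_rowStochastic {m n : Type*} [Fintype m] [Fintype n]
    {M : Matrix m n ℝ} (hnonneg : ∀ i j, 0 ≤ M i j) (hrow : ∀ i, ∑ j, M i j = 1) :
    ‖M‖ ≤ 1 := by
  rw [linfty_opNorm_def, ← NNReal.coe_one, NNReal.coe_le_coe]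
  refine Finset.sup_le fun i _ => ?_
  rw [← NNReal.coe_le_coe]
  simp [Real.norm_of_nonneg (hnonneg _ _), hrow]

theorem IsHermitian.le_one_of_rowStochastic {n : Type*} [Fintype n] [DecidableEq n]
    {M : Matrix n n ℝ} (hM : M.IsHermitian) (hnonneg : ∀ i j, 0 ≤ M i j)
    (hrow : ∀ i, ∑ j, M i j = 1) : M ≤ 1 := by
  have hone : ‖(1 : Matrix n n ℝ)‖ ≤ 1 :=
    linfty_opNorm_le_one_of_rowStochastic (M := 1) (fun i j => by rw [one_apply]; positivity)
      (fun i => by simp [one_apply])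
  refine CFC.le_one (R := ℝ) (fun x hx => ?_) hM.isSelfAdjoint
  -- `‖1‖` is `0` for an empty index type, so there is no `NormOneClass` to drop it.
  calc x ≤ ‖x‖ := Real.le_norm_self x
    _ ≤ ‖M‖ * ‖(1 : Matrix n n ℝ)‖ := spectrum.norm_le_norm_mul_of_mem hx
    _ ≤ 1 := mul_le_one₀ (linfty_opNorm_le_one_of_rowStochastic hnonneg hrow) (norm_nonneg _) hone

end LinftyOpNorm

end Matrix

theorem eigDesc_eq_eigenvalues₀ {n : ℕ} {A : Matrix (Fin n) (Fin n) ℝ} (hA : A.IsHermitian)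
    (k : Fin n) : eigDesc hA k = hA.eigenvalues₀ (k.cast (Fintype.card_fin n).symm) := by
  let e : Fin (Fintype.card (Fin n)) ≃ Fin n := Fintype.equivOfCardEq (Fintype.card_fin _)
  have hanti : Antitone (hA.eigenvalues ∘ ((finCongr (Fintype.card_fin n).symm).trans e)) := by
    intro i j hij
    simp only [Function.comp_apply, Matrix.IsHermitian.eigenvalues, e, Equiv.trans_apply,
      Equiv.symm_apply_apply, finCongr_apply]
    exact hA.eigenvalues₀_antitone hij
  simpa [eigDesc, Matrix.IsHermitian.eigenvalues, e] using
    Tuple.apply_sort_rev_of_antitone _ hanti k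

/-- If `M` is symmetric stochastic and `B` is any symmetric matrix, then for
the eigenvalues listed in decreasing order, `λ_k(M + B) ≤ λ_k(I + B)` for every `k`. -/
theorem eigDesc_add_stochastic_le_eigDesc_add_one
    {n : ℕ} (M B : Matrix (Fin n) (Fin n) ℝ)
    (hM : M.IsHermitian) (hnonneg : ∀ i j, 0 ≤ M i j) (hrow : ∀ i, ∑ j, M i j = 1)
    (hB : B.IsHermitian) :
    ∀ k : Fin n, eigDesc (hM.add hB) k ≤ eigDesc (Matrix.isHermitian_one.add hB) k := by
  intro k
  rw [eigDesc_eq_eigenvalues₀, eigDesc_eq_eigenvalues₀]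
  exact (hM.add hB).eigenvalues₀_le_of_le _
    (add_le_add_left (hM.le_one_of_rowStochastic hnonneg hrow) B) _
end

section
/- Let A, Δ ∈ ℝ^{n×n} be symmetric with Δ positive semidefinite. If there is no nonzero vector x ∈ ℝ^n satisfying both Ax = λmax(A)·x and Δx = 0, then λmax(A − Δ) < λmax(A). -/
/-!
Take an eigenvector `x` of `A - Δ` for `λmax(A - Δ)`. Since `A ≤ λmax(A) • 1` in the
Loewner order, `λmax(A - Δ) |x|² + xᵀΔx = xᵀAx ≤ λmax(A) |x|²`, so `λmax(A - Δ) ≤ λmax(A)`.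
In the case of equality `xᵀΔx = 0`, hence `Δx = 0` as `Δ` is positive semidefinite, and then
`Ax = (A - Δ)x = λmax(A) x`, which the hypothesis excludes.
-/

noncomputable def eigMax {m : Type*} [Fintype m] [DecidableEq m]
    {A : Matrix m m ℝ} (hA : A.IsHermitian) : ℝ :=
  ⨆ i, hA.eigenvalues i

open Matrix

namespace Matrix.IsHermitian

variable {m : Type*} [Fintype m] [DecidableEq m] {A : Matrix m m ℝ}

theorem eigenvalues_le_eigMax (hA : A.IsHermitian) (i : m) : hA.eigenvalues i ≤ eigMax hA :=
  le_ciSup (Set.finite_range _).bddAbove i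

theorem exists_eigenvalues_eq_eigMax [Nonempty m] (hA : A.IsHermitian) :
    ∃ i, hA.eigenvalues i = eigMax hA :=
  exists_eq_ciSup_of_finite

open scoped MatrixOrder in
theorem le_algebraMap_eigMax (hA : A.IsHermitian) : A ≤ algebraMap ℝ _ (eigMax hA) := by
  refine le_algebraMap_of_spectrum_le ?_ hA.isSelfAdjoint
  rw [hA.spectrum_real_eq_range_eigenvalues]
  rintro _ ⟨i, rfl⟩
  exact hA.eigenvalues_le_eigMax i

theorem dotProduct_mulVec_le_eigMax_mul (hA : A.IsHermitian) (x : m → ℝ) :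
    x ⬝ᵥ A *ᵥ x ≤ eigMax hA * (x ⬝ᵥ x) := by
  have h := (Matrix.le_iff.mp hA.le_algebraMap_eigMax).dotProduct_mulVec_nonneg x
  rw [algebraMap_eq_diagonal, sub_mulVec, dotProduct_sub, Pi.algebraMap_def,
    diagonal_const_mulVec] at h
  simpa using h

theorem exists_ne_zero_mulVec_eq_eigMax_smul [Nonempty m] (hA : A.IsHermitian) :
    ∃ x : m → ℝ, x ≠ 0 ∧ A *ᵥ x = eigMax hA • x := by
  obtain ⟨i, hi⟩ := hA.exists_eigenvalues_eq_eigMax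
  refine ⟨hA.eigenvectorBasis i, ?_, hi ▸ hA.mulVec_eigenvectorBasis i⟩
  exact (WithLp.ofLp_eq_zero _).not.mpr (hA.eigenvectorBasis.orthonormal.ne_zero i)

end Matrix.IsHermitian

/-- Let `A, Δ` be symmetric matrices with `Δ` positive semidefinite. If there
is no nonzero vector `x` satisfying both `Ax = λmax(A)·x` and `Δx = 0`, then
`λmax(A − Δ) < λmax(A)`. -/
theorem eigMax_sub_posSemidef_lt
    {n : ℕ} (hn : 0 < n) (A Δ : Matrix (Fin n) (Fin n) ℝ)
    (hA : A.IsHermitian) (hΔ : Δ.PosSemidef)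
    (hno : ¬ ∃ x : Fin n → ℝ, x ≠ 0 ∧ A.mulVec x = eigMax hA • x ∧ Δ.mulVec x = 0) :
    eigMax (hA.sub hΔ.1) < eigMax hA := by
  have : Nonempty (Fin n) := Fin.pos_iff_nonempty.mp hn
  set hS := hA.sub hΔ.1
  obtain ⟨x, hx0, hx⟩ := hS.exists_ne_zero_mulVec_eq_eigMax_smul
  have hxx : 0 < x ⬝ᵥ x := by simpa using dotProduct_star_self_pos_iff.mpr hx0
  have hxΔx : 0 ≤ x ⬝ᵥ Δ *ᵥ x := by simpa using hΔ.dotProduct_mulVec_nonneg x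
  have hAx : A *ᵥ x = eigMax hS • x + Δ *ᵥ x := by rw [← hx, sub_mulVec, sub_add_cancel]
  have key : eigMax hS * (x ⬝ᵥ x) + x ⬝ᵥ Δ *ᵥ x ≤ eigMax hA * (x ⬝ᵥ x) := by
    simpa [hAx, dotProduct_add, dotProduct_smul] using hA.dotProduct_mulVec_le_eigMax_mul x
  refine lt_of_le_of_ne (le_of_mul_le_mul_right (by linarith) hxx) fun heq => ?_
  have hΔx : Δ *ᵥ x = 0 := (hΔ.dotProduct_mulVec_zero_iff x).mp (by
    rw [heq] at key; simp only [star_trivial]; linarith)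
  exact hno ⟨x, hx0, by rw [hAx, hΔx, heq, add_zero], hΔx⟩
end

section
/- Let f₁, …, f_N : ℝ^d → ℝ be twice continuously differentiable, let θ_i* satisfy ∇f_i(θ_i*) = 0, and write 𝛉* = (θ₁*, …, θ_N*) ∈ ℝ^{dN}. Let ℳ ∈ ℝ^{dN×dN} be a symmetric block matrix whose (i,j) block M_{ij} is a d×d diagonal matrix, and consider one step of multi-task gradient descent: θ_i⁺ = Σ_{j=1}^N M_{ij} θ_j − α∇f_i(θ_i), with 𝛉 = (θ₁,…,θ_N) and 𝛉⁺ = (θ₁⁺,…,θ_N⁺). Let H = diag(H₁, …, H_N) ∈ ℝ^{dN×dN} be the block-diagonal matrix with H_i = ∫₀¹ ∇²f_i(θ_i* + μ(θ_i − θ_i*)) dμ. Then 𝛉⁺ − 𝛉* = (ℳ − αH)(𝛉 − 𝛉*) + (ℳ − I_{dN})𝛉*, and consequently ‖𝛉⁺ − 𝛉*‖ ≤ ρ(ℳ − αH)·‖𝛉 − 𝛉*‖ + ‖(ℳ − I_{dN})𝛉*‖, where ‖·‖ is the Euclidean norm. -/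
/-- The block operator on `(ℝ^d)^N` (with the Euclidean/ℓ² norm on the concatenation)
determined by an `N × N` array of operators on `ℝ^d`: the `i`-th block of the output is
`∑ j, T i j (x j)`. -/
noncomputable def blockOp {N d : ℕ}
    (T : Fin N → Fin N → (EuclideanSpace ℝ (Fin d) →L[ℝ] EuclideanSpace ℝ (Fin d))) :
    PiLp 2 (fun _ : Fin N => EuclideanSpace ℝ (Fin d)) →L[ℝ]
      PiLp 2 (fun _ : Fin N => EuclideanSpace ℝ (Fin d)) :=
  letI : ContinuousSMul ℝ (PiLp 2 (fun _ : Fin N => EuclideanSpace ℝ (Fin d))) := inferInstance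
  LinearMap.toContinuousLinearMap <|
    ((WithLp.linearEquiv 2 ℝ (∀ _ : Fin N, EuclideanSpace ℝ (Fin d))).symm.toLinearMap.comp
      ((LinearMap.pi fun i => ∑ j, (T i j).toLinearMap.comp (LinearMap.proj j)).comp
        (WithLp.linearEquiv 2 ℝ (∀ _ : Fin N, EuclideanSpace ℝ (Fin d))).toLinearMap))

/-- The averaged Hessian of `g` along the segment from `a` to `b`,
`∫₀¹ ∇²g(a + μ(b − a)) dμ`, as a continuous linear map. -/
noncomputable def avgHess {d : ℕ} (g : EuclideanSpace ℝ (Fin d) → ℝ)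
    (a b : EuclideanSpace ℝ (Fin d)) :
    EuclideanSpace ℝ (Fin d) →L[ℝ] EuclideanSpace ℝ (Fin d) :=
  ∫ μ in (0:ℝ)..1, fderiv ℝ (gradient g) (a + μ • (b - a))

/-!
Since `∇fᵢ(θᵢ*) = 0`, the fundamental theorem of calculus along the segment from `θᵢ*` to `θᵢ`
gives `∇fᵢ(θᵢ) = Hᵢ (θᵢ − θᵢ*)`. Substituting this into the update rule and adding and
subtracting `ℳ𝛉*` yields the identity blockwise; the bound is then the triangle inequality
together with `‖(ℳ − αH) v‖ ≤ ‖ℳ − αH‖ ‖v‖`.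
-/

section BlockOp

variable {N d : ℕ}

lemma blockOp_apply
    (T : Fin N → Fin N → (EuclideanSpace ℝ (Fin d) →L[ℝ] EuclideanSpace ℝ (Fin d)))
    (x : PiLp 2 (fun _ : Fin N => EuclideanSpace ℝ (Fin d))) (i : Fin N) :
    blockOp T x i = ∑ j, T i j (x j) := by
  simp [blockOp, LinearMap.pi_apply]

lemma blockOp_diagonal_apply
    (A : Fin N → (EuclideanSpace ℝ (Fin d) →L[ℝ] EuclideanSpace ℝ (Fin d)))
    (x : PiLp 2 (fun _ : Fin N => EuclideanSpace ℝ (Fin d))) (i : Fin N) :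
    blockOp (fun i j => if i = j then A i else 0) x i = A i (x i) := by
  rw [blockOp_apply, Finset.sum_eq_single_of_mem i (Finset.mem_univ i)
    fun j _ hj => by simp [hj.symm]]
  simp

end BlockOp

lemma gradient_sub_gradient_eq_avgHess_apply {d : ℕ} {g : EuclideanSpace ℝ (Fin d) → ℝ}
    (hg : ContDiff ℝ 2 g) (a b : EuclideanSpace ℝ (Fin d)) :
    gradient g b - gradient g a = avgHess g a b (b - a) := by
  have hgrad : ContDiff ℝ 1 (gradient g) :=
    (InnerProductSpace.toDual ℝ _).symm.contDiff.comp (hg.fderiv_right (by norm_num))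
  have hHess : Continuous fun μ : ℝ => fderiv ℝ (gradient g) (a + μ • (b - a)) :=
    (hgrad.continuous_fderiv one_ne_zero).comp (by fun_prop)
  have hderiv : ∀ μ ∈ Set.uIcc (0:ℝ) 1, HasDerivAt (fun μ : ℝ => gradient g (a + μ • (b - a)))
      (fderiv ℝ (gradient g) (a + μ • (b - a)) (b - a)) μ := by
    intro μ _
    have hseg : HasDerivAt (fun μ : ℝ => a + μ • (b - a)) (b - a) μ := by
      simpa using ((hasDerivAt_id μ).smul_const (b - a)).const_add a
    exact ((hgrad.differentiable one_ne_zero _).hasFDerivAt).comp_hasDerivAt μ hseg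
  rw [avgHess, ContinuousLinearMap.intervalIntegral_apply (hHess.intervalIntegrable 0 1),
    intervalIntegral.integral_eq_sub_of_hasDerivAt hderiv
      ((hHess.clm_apply continuous_const).intervalIntegrable 0 1)]
  simp

theorem multitask_gd_one_step_bound_general {d N : ℕ}
    (f : Fin N → EuclideanSpace ℝ (Fin d) → ℝ) (hf : ∀ i, ContDiff ℝ 2 (f i))
    (θstar : PiLp 2 fun _ : Fin N => EuclideanSpace ℝ (Fin d))
    (hstar : ∀ i, gradient (f i) (θstar i) = 0)
    (M : Fin N → Fin N → Matrix (Fin d) (Fin d) ℝ)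
    (α : ℝ)
    (θ θplus : PiLp 2 fun _ : Fin N => EuclideanSpace ℝ (Fin d))
    (hupdate : ∀ i, θplus i =
      (∑ j, Matrix.toEuclideanCLM (𝕜 := ℝ) (M i j) (θ j)) - α • gradient (f i) (θ i))
    (ℳop Hop : (PiLp 2 fun _ : Fin N => EuclideanSpace ℝ (Fin d)) →L[ℝ]
      (PiLp 2 fun _ : Fin N => EuclideanSpace ℝ (Fin d)))
    (hℳop : ℳop = blockOp fun i j => Matrix.toEuclideanCLM (𝕜 := ℝ) (M i j))
    (hHop : Hop = blockOp fun i j =>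
      if i = j then avgHess (f i) (θstar i) (θ i) else 0) :
    θplus - θstar =
        (ℳop - α • Hop) (θ - θstar) + (ℳop - ContinuousLinearMap.id ℝ (PiLp 2 fun _ : Fin N => EuclideanSpace ℝ (Fin d))) θstar ∧
    ‖θplus - θstar‖ ≤
        ‖ℳop - α • Hop‖ * ‖θ - θstar‖ + ‖(ℳop - ContinuousLinearMap.id ℝ (PiLp 2 fun _ : Fin N => EuclideanSpace ℝ (Fin d))) θstar‖ := by
  have hgrad : ∀ i, gradient (f i) (θ i) = avgHess (f i) (θstar i) (θ i) (θ i - θstar i) := by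
    intro i
    simpa [hstar i] using gradient_sub_gradient_eq_avgHess_apply (hf i) (θstar i) (θ i)
  have hstep : θplus - θstar = (ℳop - α • Hop) (θ - θstar) + (ℳop - ContinuousLinearMap.id ℝ
      (PiLp 2 fun _ : Fin N => EuclideanSpace ℝ (Fin d))) θstar := by
    subst hℳop hHop
    ext1 i
    simp only [PiLp.sub_apply, PiLp.add_apply, PiLp.smul_apply, sub_apply, smul_apply,
      ContinuousLinearMap.id_apply, blockOp_diagonal_apply]
    simp only [map_sub, PiLp.sub_apply, blockOp_apply, hupdate i, hgrad i]
    abel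
  refine ⟨hstep, hstep ▸ (norm_add_le _ _).trans ?_⟩
  gcongr
  exact ContinuousLinearMap.le_opNorm _ _

/-- One step of multi-task gradient descent
`θᵢ⁺ = ∑ⱼ Mᵢⱼ θⱼ − α∇fᵢ(θᵢ)` (with `ℳ` a symmetric block matrix with `d × d` diagonal
blocks `Mᵢⱼ`) satisfies `𝛉⁺ − 𝛉* = (ℳ − αH)(𝛉 − 𝛉*) + (ℳ − I)𝛉*`, where
`H = diag(H₁, …, H_N)` with `Hᵢ = ∫₀¹ ∇²fᵢ(θᵢ* + μ(θᵢ − θᵢ*)) dμ`, and consequently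
`‖𝛉⁺ − 𝛉*‖ ≤ ρ(ℳ − αH)·‖𝛉 − 𝛉*‖ + ‖(ℳ − I)𝛉*‖` (for the symmetric matrix `ℳ − αH`
the spectral radius `ρ` equals the operator norm). -/
theorem multitask_gd_one_step_bound {d N : ℕ}
    (f : Fin N → EuclideanSpace ℝ (Fin d) → ℝ) (hf : ∀ i, ContDiff ℝ 2 (f i))
    (θstar : PiLp 2 fun _ : Fin N => EuclideanSpace ℝ (Fin d))
    (hstar : ∀ i, gradient (f i) (θstar i) = 0)
    (M : Fin N → Fin N → Matrix (Fin d) (Fin d) ℝ)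
    (hMdiag : ∀ i j, (M i j).IsDiag)
    (hMsymm : ∀ i j, M i j = M j i)
    (α : ℝ)
    (θ θplus : PiLp 2 fun _ : Fin N => EuclideanSpace ℝ (Fin d))
    (hupdate : ∀ i, θplus i =
      (∑ j, Matrix.toEuclideanCLM (𝕜 := ℝ) (M i j) (θ j)) - α • gradient (f i) (θ i))
    (ℳop Hop : (PiLp 2 fun _ : Fin N => EuclideanSpace ℝ (Fin d)) →L[ℝ]
      (PiLp 2 fun _ : Fin N => EuclideanSpace ℝ (Fin d)))
    (hℳop : ℳop = blockOp fun i j => Matrix.toEuclideanCLM (𝕜 := ℝ) (M i j))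
    (hHop : Hop = blockOp fun i j =>
      if i = j then avgHess (f i) (θstar i) (θ i) else 0) :
    θplus - θstar =
        (ℳop - α • Hop) (θ - θstar) + (ℳop - ContinuousLinearMap.id ℝ (PiLp 2 fun _ : Fin N => EuclideanSpace ℝ (Fin d))) θstar ∧
    ‖θplus - θstar‖ ≤
        ‖ℳop - α • Hop‖ * ‖θ - θstar‖ + ‖(ℳop - ContinuousLinearMap.id ℝ (PiLp 2 fun _ : Fin N => EuclideanSpace ℝ (Fin d))) θstar‖ :=
  multitask_gd_one_step_bound_general f hf θstar hstar M α θ θplus hupdate ℳop Hop hℳop hHop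
end
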